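/- Let n ≥ 1 and 1 ≤ m < 2^{n/2} be integers, let w ∈ {0,1}^n, and let P be a deterministic protocol given by a collection of at most 2^C pairwise disjoint rectangles covering {0,1}^{nm} × {0,1}^{nm}, each labeled 0 or 1. Let p be the fraction of instances (X,Y) lying in a 1-labeled rectangle, and let p_wrong be the fraction of instances (X,Y) lying in a 1-labeled rectangle for which w is not a solution to XOR-Missing-String on (X,Y). Then p ≤ 2^{−m+2}·2^C + p_wrong·2^{2n+2}. -/

import Mathlib

/-!
Call a value `a ∈ α` heavy for a set `F` of `m`-tuples if at least a `1/(2|α|)` fraction of `F`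
contains `a`. At most half of the tuples of `F` contain a light value, so
`|F| ≤ 2 · #heavy^m`. On a rectangle `A × B`, shift the rows of `B` by `w`: if `A` and the shifted
`B` share a heavy value `a`, then the tuples containing `a` on both sides give at least
`|A||B| / (4|α|²)` pairs for which `w` is not a solution; otherwise the heavy sets `S`, `T` are
disjoint, so `4 · #S · #T ≤ |α|²` and `|A||B| ≤ 4 (|α|²/4)^m`. Summing over the disjoint 1-rectangles gives
the bound.
-/

open Finset

section HeavyValues

variable {ι α : Type*} [Fintype ι] [Fintype α] [DecidableEq α]

def heavyValues (F : Finset (ι → α)) : Finset α :=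
  {a | #F ≤ 2 * Fintype.card α * #{X ∈ F | ∃ i, X i = a}}

lemma two_mul_card_filter_exists_notMem_heavyValues_le (F : Finset (ι → α)) :
    2 * #{X ∈ F | ∃ i, X i ∉ heavyValues F} ≤ #F := by
  set L := {X ∈ F | ∃ i, X i ∉ heavyValues F}
  obtain hL | ⟨X, hX⟩ := L.eq_empty_or_nonempty
  · simp [hL]
  -- needed to cancel the factor `card α` at the end
  have : Nonempty α := ⟨X (mem_filter.mp hX).2.choose⟩
  have hcover : L ⊆ (heavyValues F)ᶜ.biUnion fun a => {X ∈ F | ∃ i, X i = a} := by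
    intro X hX
    obtain ⟨hXF, i, hi⟩ := mem_filter.mp hX
    exact mem_biUnion.mpr ⟨X i, mem_compl.mpr hi, mem_filter.mpr ⟨hXF, i, rfl⟩⟩
  have hlight : ∀ a ∈ (heavyValues F)ᶜ, 2 * Fintype.card α * #{X ∈ F | ∃ i, X i = a} ≤ #F :=
    fun a ha => by
      simp only [heavyValues, mem_compl, mem_filter, mem_univ, true_and, not_le] at ha
      exact ha.le
  refine Nat.le_of_mul_le_mul_left ?_ (Fintype.card_pos (α := α))
  calc Fintype.card α * (2 * #L)
      ≤ 2 * Fintype.card α * ∑ a ∈ (heavyValues F)ᶜ, #{X ∈ F | ∃ i, X i = a} := by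
        rw [mul_left_comm, mul_assoc]
        gcongr
        exact (card_le_card hcover).trans card_biUnion_le
    _ ≤ ∑ a ∈ (heavyValues F)ᶜ, #F := by
        rw [mul_sum]
        exact sum_le_sum hlight
    _ ≤ Fintype.card α * #F := by
        rw [sum_const, smul_eq_mul]
        gcongr
        exact card_le_univ _

lemma card_le_two_mul_card_heavyValues_pow (F : Finset (ι → α)) :
    #F ≤ 2 * #(heavyValues F) ^ Fintype.card ι := by
  have hgood : #{X ∈ F | ∀ i, X i ∈ heavyValues F} ≤ #(heavyValues F) ^ Fintype.card ι := by
    classical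
    calc #{X ∈ F | ∀ i, X i ∈ heavyValues F}
        ≤ #(Fintype.piFinset fun _ : ι => heavyValues F) :=
          card_le_card fun X hX => Fintype.mem_piFinset.mpr (mem_filter.mp hX).2
      _ = #(heavyValues F) ^ Fintype.card ι := by simp
  have hsplit := card_filter_add_card_filter_not (s := F) (fun X => ∀ i, X i ∈ heavyValues F)
  simp only [not_forall] at hsplit
  have := two_mul_card_filter_exists_notMem_heavyValues_le F
  omega


lemma card_mul_card_le_of_mem_heavyValues {A B : Finset (ι → α)} {a : α}
    (hA : a ∈ heavyValues A) (hB : a ∈ heavyValues B) :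
    #A * #B ≤ 4 * Fintype.card α ^ 2 * #{p ∈ A ×ˢ B | ∃ i j, p.1 i = p.2 j} := by
  simp only [heavyValues, mem_filter, mem_univ, true_and] at hA hB
  have hsub : {X ∈ A | ∃ i, X i = a} ×ˢ {Y ∈ B | ∃ j, Y j = a} ⊆
      {p ∈ A ×ˢ B | ∃ i j, p.1 i = p.2 j} := by
    rintro ⟨X, Y⟩ hXY
    simp only [mem_product, mem_filter] at hXY ⊢
    obtain ⟨⟨hX, i, rfl⟩, hY, j, hj⟩ := hXY
    exact ⟨⟨hX, hY⟩, i, j, hj.symm⟩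
  calc #A * #B
      ≤ (2 * Fintype.card α * #{X ∈ A | ∃ i, X i = a}) *
          (2 * Fintype.card α * #{Y ∈ B | ∃ j, Y j = a}) := Nat.mul_le_mul hA hB
    _ = 4 * Fintype.card α ^ 2 *
          #({X ∈ A | ∃ i, X i = a} ×ˢ {Y ∈ B | ∃ j, Y j = a}) := by
        rw [card_product]; ring
    _ ≤ _ := by gcongr

lemma card_mul_card_mul_four_pow_le_of_disjoint {A B : Finset (ι → α)}
    (h : Disjoint (heavyValues A) (heavyValues B)) :
    #A * #B * 4 ^ Fintype.card ι ≤ 4 * Fintype.card α ^ (2 * Fintype.card ι) := by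
  set S := heavyValues A
  set T := heavyValues B
  have hST : 4 * #S * #T ≤ Fintype.card α ^ 2 :=
    calc 4 * #S * #T ≤ (#S + #T) ^ 2 := four_mul_le_sq_add _ _
      _ ≤ Fintype.card α ^ 2 := by
        gcongr
        rw [← card_union_of_disjoint h]
        exact card_le_univ _
  calc #A * #B * 4 ^ Fintype.card ι
      ≤ (2 * #S ^ Fintype.card ι) * (2 * #T ^ Fintype.card ι) * 4 ^ Fintype.card ι := by
        gcongr
        · exact card_le_two_mul_card_heavyValues_pow A
        · exact card_le_two_mul_card_heavyValues_pow B
    _ = 4 * (4 * #S * #T) ^ Fintype.card ι := by ring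
    _ ≤ 4 * (Fintype.card α ^ 2) ^ Fintype.card ι := by gcongr
    _ = 4 * Fintype.card α ^ (2 * Fintype.card ι) := by rw [pow_mul]

lemma card_mul_card_mul_four_pow_le (A B : Finset (ι → α)) :
    #A * #B * 4 ^ Fintype.card ι ≤ 4 * Fintype.card α ^ (2 * Fintype.card ι) +
      4 * Fintype.card α ^ 2 * 4 ^ Fintype.card ι * #{p ∈ A ×ˢ B | ∃ i j, p.1 i = p.2 j} := by
  by_cases h : Disjoint (heavyValues A) (heavyValues B)
  · exact (card_mul_card_mul_four_pow_le_of_disjoint h).trans (Nat.le_add_right _ _)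
  · obtain ⟨a, hA, hB⟩ := not_disjoint_iff.mp h
    have := card_mul_card_le_of_mem_heavyValues hA hB
    calc #A * #B * 4 ^ Fintype.card ι
        ≤ 4 * Fintype.card α ^ 2 * #{p ∈ A ×ˢ B | ∃ i j, p.1 i = p.2 j} * 4 ^ Fintype.card ι := by
          gcongr
      _ ≤ _ := by rw [mul_right_comm]; exact Nat.le_add_left _ _

end HeavyValues

section XorShift

variable {ι κ : Type*}

def xorRows (w : κ → Bool) (Y : ι → κ → Bool) : ι → κ → Bool :=
  fun j u => xor (Y j u) (w u)

lemma xorRows_involutive (w : κ → Bool) : Function.Involutive (xorRows (ι := ι) w) :=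
  fun Y => by funext j u; simp [xorRows]

lemma eq_xor_iff_eq_xorRows (w : κ → Bool) (X Y : ι → κ → Bool) (i j : ι) :
    (w = fun u => xor (X i u) (Y j u)) ↔ X i = xorRows w Y j := by
  simp only [xorRows, funext_iff]
  constructor <;> intro h u <;> rw [h u] <;> simp [Bool.xor_comm, Bool.xor_left_comm]

variable [Fintype ι] [Fintype κ]

lemma card_filter_eq_xor_eq_map_xorRows (w : κ → Bool) (A B : Finset (ι → κ → Bool)) :
    #{p ∈ A ×ˢ B | ∃ i j, w = fun u => xor (p.1 i u) (p.2 j u)} =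
      #{p ∈ A ×ˢ B.map ((xorRows_involutive w).toPerm _).toEmbedding | ∃ i j, p.1 i = p.2 j} := by
  have hinv := xorRows_involutive (ι := ι) w
  refine card_nbij' (Prod.map id (xorRows w)) (Prod.map id (xorRows w)) ?_ ?_
    (fun p _ => Prod.ext rfl (hinv p.2)) (fun p _ => Prod.ext rfl (hinv p.2))
  all_goals
    rintro ⟨X, Y⟩ h
    simpa [Function.Involutive.coe_toPerm, Function.Involutive.toPerm_symm, hinv Y,
      eq_xor_iff_eq_xorRows] using h

lemma card_mul_card_mul_four_pow_le_xor [DecidableEq κ] (w : κ → Bool)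
    (A B : Finset (ι → κ → Bool)) :
    #A * #B * 4 ^ Fintype.card ι ≤ 4 * 2 ^ (2 * Fintype.card κ * Fintype.card ι) +
      2 ^ (2 * Fintype.card κ + 2) * 4 ^ Fintype.card ι *
        #{p ∈ A ×ˢ B | ∃ i j, w = fun u => xor (p.1 i u) (p.2 j u)} := by
  have := card_mul_card_mul_four_pow_le A (B.map ((xorRows_involutive w).toPerm _).toEmbedding)
  rw [card_map, ← card_filter_eq_xor_eq_map_xorRows] at this
  convert this using 3 <;> simp only [Fintype.card_fun, Fintype.card_bool, ← pow_mul] <;> ring_nf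

end XorShift

lemma mul_card_biUnion_le {β ι : Type*} [DecidableEq β] {T : Finset ι} {s : ι → Finset β}
    (hs : (T : Set ι).PairwiseDisjoint s) (P : β → Prop) [DecidablePred P] {a c d : ℕ}
    (h : ∀ t ∈ T, #(s t) * a ≤ c + d * #{x ∈ s t | P x}) :
    #(T.biUnion s) * a ≤ #T * c + d * #{x ∈ T.biUnion s | P x} := by
  have hsP : (T : Set ι).PairwiseDisjoint fun t => {x ∈ s t | P x} :=
    hs.mono fun t => filter_subset _ _
  rw [card_biUnion hs, filter_biUnion, card_biUnion hsP, sum_mul, mul_sum, ← smul_eq_mul,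
    ← sum_const, ← sum_add_distrib]
  exact sum_le_sum h

lemma div_le_four_mul_div_two_pow_add {a b c d M : ℝ} {m : ℕ} (hc : 0 ≤ c) (hM : 0 < M)
    (h : a * 4 ^ m ≤ c * (4 * M) + d * 4 ^ m * b) :
    a / M ≤ 4 * c / 2 ^ m + b / M * d := by
  have h4 : (2 : ℝ) ^ m ≤ 4 ^ m := by gcongr; norm_num
  calc a / M = a * 4 ^ m / (4 ^ m * M) := by field_simp
    _ ≤ (c * (4 * M) + d * 4 ^ m * b) / (4 ^ m * M) := by gcongr
    _ = 4 * c / 4 ^ m + b / M * d := by field_simp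
    _ ≤ 4 * c / 2 ^ m + b / M * d := by gcongr

theorem stmt10_general (n m : ℕ)
    (w : Fin n → Bool) (C N : ℕ)
    (Rx Ry : Fin N → Finset (Fin m → Fin n → Bool)) (lab : Fin N → Bool)
    (hN : N ≤ 2 ^ C)
    (hpart : ∀ X Y : Fin m → Fin n → Bool, ∃! t : Fin N, X ∈ Rx t ∧ Y ∈ Ry t) :
    (((Finset.univ.filter
        (fun p : (Fin m → Fin n → Bool) × (Fin m → Fin n → Bool) =>
          ∃ t : Fin N, lab t = true ∧ p.1 ∈ Rx t ∧ p.2 ∈ Ry t)).card : ℝ) / 2 ^ (2 * n * m))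
      ≤ 4 * (2 : ℝ) ^ C / 2 ^ m +
        (((Finset.univ.filter
            (fun p : (Fin m → Fin n → Bool) × (Fin m → Fin n → Bool) =>
              (∃ t : Fin N, lab t = true ∧ p.1 ∈ Rx t ∧ p.2 ∈ Ry t) ∧
              ∃ i j : Fin m, w = fun u => Bool.xor (p.1 i u) (p.2 j u))).card : ℝ)
          / 2 ^ (2 * n * m)) * 2 ^ (2 * n + 2) := by
  set T : Finset (Fin N) := {t | lab t = true}
  have hdisj : (T : Set (Fin N)).PairwiseDisjoint fun t => Rx t ×ˢ Ry t := by
    intro t₁ _ t₂ _ hne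
    refine disjoint_left.mpr fun p hp₁ hp₂ => hne ?_
    obtain ⟨t, -, huniq⟩ := hpart p.1 p.2
    exact (huniq t₁ (mem_product.mp hp₁)).trans (huniq t₂ (mem_product.mp hp₂)).symm
  have hcount := mul_card_biUnion_le hdisj
    (fun p => ∃ i j : Fin m, w = fun u => xor (p.1 i u) (p.2 j u))
    (a := 4 ^ m) (c := 4 * 2 ^ (2 * n * m)) (d := 2 ^ (2 * n + 2) * 4 ^ m) fun t _ => by
      rw [card_product]
      convert card_mul_card_mul_four_pow_le_xor w (Rx t) (Ry t) using 5 <;> rw [Fintype.card_fin]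
  have hT : #T ≤ 2 ^ C := (card_le_univ T).trans (by simpa using hN)
  have haccepted : univ.filter (fun p : (Fin m → Fin n → Bool) × (Fin m → Fin n → Bool) =>
      ∃ t, lab t = true ∧ p.1 ∈ Rx t ∧ p.2 ∈ Ry t) = T.biUnion fun t => Rx t ×ˢ Ry t := by
    ext; simp [T]
  have hwrong : univ.filter (fun p : (Fin m → Fin n → Bool) × (Fin m → Fin n → Bool) =>
      (∃ t, lab t = true ∧ p.1 ∈ Rx t ∧ p.2 ∈ Ry t) ∧
        ∃ i j : Fin m, w = fun u => xor (p.1 i u) (p.2 j u)) =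
      {p ∈ T.biUnion fun t => Rx t ×ˢ Ry t |
        ∃ i j : Fin m, w = fun u => xor (p.1 i u) (p.2 j u)} := by
    rw [← haccepted, filter_filter]
  rw [haccepted, hwrong]
  refine div_le_four_mul_div_two_pow_add (by positivity) (by positivity) ?_
  exact_mod_cast hcount.trans (by gcongr)

/-- Relation between true positives and false positives of a deterministic Boolean-labeled
protocol (a partition into at most `2^C` labeled rectangles) with respect to a fixed candidate
answer `w` for XOR-Missing-String: `p ≤ 2^{-m+2}·2^C + p_wrong·2^{2n+2}`. -/
theorem stmt10 (n m : ℕ) (hn : 1 ≤ n) (hm : 1 ≤ m)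
    (hm2 : (m : ℝ) < (2 : ℝ) ^ ((n : ℝ) / 2))
    (w : Fin n → Bool) (C N : ℕ)
    (Rx Ry : Fin N → Finset (Fin m → Fin n → Bool)) (lab : Fin N → Bool)
    (hN : N ≤ 2 ^ C)
    (hpart : ∀ X Y : Fin m → Fin n → Bool, ∃! t : Fin N, X ∈ Rx t ∧ Y ∈ Ry t) :
    (((Finset.univ.filter
        (fun p : (Fin m → Fin n → Bool) × (Fin m → Fin n → Bool) =>
          ∃ t : Fin N, lab t = true ∧ p.1 ∈ Rx t ∧ p.2 ∈ Ry t)).card : ℝ) / 2 ^ (2 * n * m))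
      ≤ 4 * (2 : ℝ) ^ C / 2 ^ m +
        (((Finset.univ.filter
            (fun p : (Fin m → Fin n → Bool) × (Fin m → Fin n → Bool) =>
              (∃ t : Fin N, lab t = true ∧ p.1 ∈ Rx t ∧ p.2 ∈ Ry t) ∧
              ∃ i j : Fin m, w = fun u => Bool.xor (p.1 i u) (p.2 j u))).card : ℝ)
          / 2 ^ (2 * n * m)) * 2 ^ (2 * n + 2) :=
  stmt10_general n m w C N Rx Ry lab hN hpart
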